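/- For every n ≥ 2, every tuning parameter η_n > 0 and every nonnegative real number a_n, the infimal coverage probability of the interval E_{S,n} = [θ̃_S − σ̂ a_n, θ̃_S + σ̂ a_n] satisfies inf_{θ∈ℝ} P_{n,θ}(θ ∈ E_{S,n}) = T_{n−1}(n^{1/2}(a_n − η_n)) − T_{n−1}(n^{1/2}(−a_n − η_n)), where T_{n−1} denotes the cumulative distribution function of the Student t-distribution with n − 1 degrees of freedom, which satisfies T_{n−1}(x) = ∫₀^∞ Φ(s x) h_n(s) ds with h_n the density of the square root of a chi-square random variable with n − 1 degrees of freedom divided by n − 1. -/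

import Mathlib

open MeasureTheory ProbabilityTheory Filter
open scoped NNReal

/-- Standard normal cumulative distribution function Φ. -/
noncomputable def stdNormCDF (x : ℝ) : ℝ :=
  ((gaussianReal 0 1) (Set.Iic x)).toReal

/-- Soft-thresholding (LASSO) estimator with threshold η, as a function of ȳ. -/
noncomputable def softThresh (η y : ℝ) : ℝ := Real.sign y * max (|y| - η) 0

/-- Hard-thresholding estimator with threshold η, as a function of ȳ. -/
noncomputable def hardThresh (η y : ℝ) : ℝ := if η < |y| then y else 0

/-- Adaptive LASSO estimator with tuning parameter η, as a function of ȳ. -/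
noncomputable def adaLasso (η y : ℝ) : ℝ := if |y| ≤ η then 0 else y - η ^ 2 / y

/-- Coverage probability `P_{n,θ}(θ ∈ [est(ȳ) - a, est(ȳ) + b])` in the
known-variance case (σ = 1), where ȳ ~ N(θ, 1/n). -/
noncomputable def cover (n : ℕ) (est : ℝ → ℝ) (a b θ : ℝ) : ℝ :=
  ((gaussianReal θ ((n : ℝ≥0))⁻¹)
    {y : ℝ | est y - a ≤ θ ∧ θ ≤ est y + b}).toReal

/-- The distribution of `σ̂ = sqrt(Q/(n-1))` where `Q ~ χ²_{n-1}`; i.e. the law of the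
square root of a chi-square random variable with `n-1` degrees of freedom divided by
`n - 1` (whose density is `h_n`). The chi-square distribution with `k` degrees of
freedom is the Gamma distribution with shape `k/2` and rate `1/2`. -/
noncomputable def sigmaHatLaw (n : ℕ) : Measure ℝ :=
  (gammaMeasure (((n : ℝ) - 1) / 2) (1 / 2)).map
    (fun q => Real.sqrt (q / ((n : ℝ) - 1)))

/-- The cumulative distribution function `T_{n-1}` of the Student t-distribution with
`n-1` degrees of freedom, via `T_{n-1}(x) = ∫₀^∞ Φ(s x) h_n(s) ds`. -/
noncomputable def studentCDF (n : ℕ) (x : ℝ) : ℝ :=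
  ∫ s, stdNormCDF (s * x) ∂(sigmaHatLaw n)

/-- Coverage probability `P_{n,θ}(θ ∈ [est(σ̂, ȳ) - σ̂ a, est(σ̂, ȳ) + σ̂ a])` in the
unknown-variance case (true σ = 1): `ȳ ~ N(θ, 1/n)` and `σ̂` (independent of `ȳ`) has
law `sigmaHatLaw n`; here `est s y` is the feasible estimator computed from `ȳ = y` and
`σ̂ = s`. -/
noncomputable def coverUV (n : ℕ) (est : ℝ → ℝ → ℝ) (a θ : ℝ) : ℝ :=
  (((gaussianReal θ ((n : ℝ≥0))⁻¹).prod (sigmaHatLaw n))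
    {p : ℝ × ℝ | est p.2 p.1 - p.2 * a ≤ θ ∧ θ ≤ est p.2 p.1 + p.2 * a}).toReal

/-!
Conditionally on `σ̂ = s`, the interval is the known-variance soft-thresholding interval with
threshold `s η` and half-length `s a`. Its coverage is a difference of two values of `Φ` that
depends on `θ` only through the position of `θ` relative to `± s a`, and its minimum over `θ`,
`Φ(√n s (a - η)) - Φ(-√n s (a + η))`, is attained at every `θ < -s a`. Integrating over `s`
gives the lower bound `T_{n-1}(√n (a - η)) - T_{n-1}(√n (-a - η))`; as `θ → -∞` the conditional
coverage eventually equals its minimum for every `s`, so by dominated convergence the lower bound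
is the infimum.
-/

open Set Topology

theorem Real.monotone_sign : Monotone Real.sign := by
  intro x y hxy
  rcases lt_trichotomy x 0 with hx | rfl | hx <;> rcases lt_trichotomy y 0 with hy | rfl | hy <;>
    simp only [Real.sign_of_neg, Real.sign_of_pos, Real.sign_zero, *] <;> norm_num <;> linarith

theorem Measurable.softThresh {α : Type*} [MeasurableSpace α] {f g : α → ℝ} (hf : Measurable f)
    (hg : Measurable g) : Measurable fun x => softThresh (f x) (g x) :=
  (Real.monotone_sign.measurable.comp hg).mul ((hg.abs.sub hf).max measurable_const)

theorem softThresh_neg (t y : ℝ) : softThresh t (-y) = -softThresh t y := by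
  simp [softThresh, Real.sign_neg]

theorem softThresh_le_iff {t c y : ℝ} (ht : 0 ≤ t) :
    softThresh t y ≤ c ↔ y ≤ if 0 ≤ c then c + t else c - t := by
  unfold softThresh
  rcases lt_trichotomy y 0 with hy | rfl | hy
  · rw [Real.sign_of_neg hy, abs_of_neg hy]
    split_ifs <;> constructor <;> intro h <;> grind
  · simp only [Real.sign_zero, zero_mul]
    split_ifs <;> constructor <;> intro h <;> linarith
  · rw [Real.sign_of_pos hy, abs_of_pos hy]
    split_ifs <;> constructor <;> intro h <;> grind

theorem le_softThresh_iff {t c y : ℝ} (ht : 0 ≤ t) :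
    c ≤ softThresh t y ↔ (if c ≤ 0 then c - t else c + t) ≤ y := by
  rw [← neg_le_neg_iff, ← softThresh_neg, softThresh_le_iff ht]
  split_ifs <;> constructor <;> intro <;> linarith

theorem stdNormCDF_eq_cdf : stdNormCDF = cdf (gaussianReal 0 1) := by
  ext x
  rw [cdf_eq_real, measureReal_def, stdNormCDF]

theorem integrable_stdNormCDF_mul {μ : Measure ℝ} [IsFiniteMeasure μ] (x : ℝ) :
    Integrable (fun s => stdNormCDF (s * x)) μ := by
  rw [stdNormCDF_eq_cdf]
  refine .of_bound ((monotone_cdf _).measurable.comp (measurable_mul_const x)).aestronglyMeasurable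
    1 (ae_of_all _ fun s => ?_)
  rw [Real.norm_of_nonneg (cdf_nonneg _ _)]
  exact cdf_le_one _ _

theorem measureReal_gaussianReal_Iic (μ : ℝ) {v : ℝ≥0} (hv : v ≠ 0) (x : ℝ) :
    (gaussianReal μ v).real (Iic x) = stdNormCDF ((x - μ) / √v) := by
  have hσ : 0 < √(v : ℝ) := Real.sqrt_pos.2 (NNReal.coe_pos.2 (pos_iff_ne_zero.2 hv))
  have hmap : (gaussianReal 0 1).map (fun z => √v * z + μ) = gaussianReal μ v := by
    rw [show (fun z => √v * z + μ) = (· + μ) ∘ (√v * ·) from rfl,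
      ← Measure.map_map (measurable_add_const μ) (measurable_const_mul _),
      gaussianReal_map_const_mul, gaussianReal_map_add_const, mul_zero, zero_add]
    congr
    ext
    simp
  rw [← hmap, map_measureReal_apply (by fun_prop) measurableSet_Iic, stdNormCDF, ← measureReal_def]
  congr 1
  ext z
  rw [mem_preimage, mem_Iic, mem_Iic, le_div_iff₀ hσ]
  constructor <;> intro <;> linarith

theorem measureReal_gaussianReal_Icc (μ : ℝ) {v : ℝ≥0} (hv : v ≠ 0) {l u : ℝ} (hlu : l ≤ u) :
    (gaussianReal μ v).real (Icc l u) = stdNormCDF ((u - μ) / √v) - stdNormCDF ((l - μ) / √v) := by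
  have := nullSingletonClass_gaussianReal (μ := μ) hv
  rw [← measureReal_congr Ioc_ae_eq_Icc, ← Iic_sdiff_Iic,
    measureReal_sdiff (Iic_subset_Iic.2 hlu) measurableSet_Iic,
    measureReal_gaussianReal_Iic μ hv, measureReal_gaussianReal_Iic μ hv]

theorem stdNormCDF_neg (x : ℝ) : stdNormCDF (-x) = 1 - stdNormCDF x := by
  have := nullSingletonClass_gaussianReal (μ := 0) one_ne_zero
  have hsymm : (gaussianReal 0 1).map (fun z => -z) = gaussianReal 0 1 := by
    simpa using gaussianReal_map_neg (μ := 0) (v := 1)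
  simp only [stdNormCDF, ← measureReal_def]
  conv_lhs => rw [← hsymm]
  rw [map_measureReal_apply measurable_neg measurableSet_Iic, neg_preimage, neg_Iic, neg_neg,
    ← compl_Iio, probReal_compl_eq_one_sub measurableSet_Iio, measureReal_congr Iio_ae_eq_Iic]

theorem abs_cover_le_one (n : ℕ) (est : ℝ → ℝ) (a b θ : ℝ) : |cover n est a b θ| ≤ 1 := by
  rw [cover, abs_of_nonneg ENNReal.toReal_nonneg]
  exact measureReal_le_one

theorem setOf_softThresh_cover_eq {t : ℝ} (ht : 0 ≤ t) (c θ : ℝ) :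
    {y | softThresh t y - c ≤ θ ∧ θ ≤ softThresh t y + c} =
      Icc (θ + if θ - c ≤ 0 then -c - t else t - c) (θ + if 0 ≤ θ + c then c + t else c - t) := by
  ext y
  have hup : softThresh t y - c ≤ θ ↔ softThresh t y ≤ θ + c := sub_le_iff_le_add
  have hlo : θ ≤ softThresh t y + c ↔ θ - c ≤ softThresh t y := sub_le_iff_le_add.symm
  rw [mem_ofPred_eq, mem_Icc, hup, hlo, softThresh_le_iff ht, le_softThresh_iff ht]
  split_ifs <;> constructor <;> rintro ⟨h₁, h₂⟩ <;> constructor <;> linarith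

theorem cover_softThresh {n : ℕ} (hn : 0 < n) {t c : ℝ} (ht : 0 ≤ t) (hc : 0 ≤ c) (θ : ℝ) :
    cover n (softThresh t) c c θ =
      stdNormCDF (√n * if 0 ≤ θ + c then c + t else c - t) -
        stdNormCDF (√n * if θ - c ≤ 0 then -c - t else t - c) := by
  have hv : ((n : ℝ≥0))⁻¹ ≠ 0 := inv_ne_zero (Nat.cast_ne_zero.2 hn.ne')
  have hσ : ∀ x : ℝ, x / √(((n : ℝ≥0))⁻¹ : ℝ≥0) = √n * x := fun x => by
    rw [NNReal.coe_inv, NNReal.coe_natCast, Real.sqrt_inv, div_inv_eq_mul, mul_comm]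
  rw [cover, ← measureReal_def, setOf_softThresh_cover_eq ht,
    measureReal_gaussianReal_Icc θ hv (by split_ifs <;> linarith), add_sub_cancel_left,
    add_sub_cancel_left, hσ, hσ]

noncomputable def softThreshInfCover (n : ℕ) (t c : ℝ) : ℝ :=
  stdNormCDF (√n * (c - t)) - stdNormCDF (√n * (-c - t))

theorem softThreshInfCover_mul (n : ℕ) (s η a : ℝ) :
    softThreshInfCover n (s * η) (s * a) =
      stdNormCDF (s * (√n * (a - η))) - stdNormCDF (s * (√n * (-a - η))) := by
  rw [softThreshInfCover]
  ring_nf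

theorem cover_softThresh_of_lt_neg {n : ℕ} (hn : 0 < n) {t c θ : ℝ} (ht : 0 ≤ t) (hc : 0 ≤ c)
    (hθ : θ < -c) : cover n (softThresh t) c c θ = softThreshInfCover n t c := by
  rw [cover_softThresh hn ht hc, if_neg (by linarith), if_pos (by linarith), softThreshInfCover]

theorem softThreshInfCover_le_cover {n : ℕ} (hn : 0 < n) {t c : ℝ} (ht : 0 ≤ t) (hc : 0 ≤ c)
    (θ : ℝ) : softThreshInfCover n t c ≤ cover n (softThresh t) c c θ := by
  have hmono : stdNormCDF (√n * (c - t)) ≤ stdNormCDF (√n * (c + t)) :=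
    stdNormCDF_eq_cdf ▸ monotone_cdf _ (by gcongr; linarith)
  rw [cover_softThresh hn ht hc, softThreshInfCover]
  split_ifs
  · linarith
  · rw [show √n * (t - c) = -(√n * (c - t)) by ring, show √n * (-c - t) = -(√n * (c + t)) by ring,
      stdNormCDF_neg, stdNormCDF_neg]
    linarith
  · rfl
  · linarith

theorem isProbabilityMeasure_sigmaHatLaw {n : ℕ} (hn : 1 < n) :
    IsProbabilityMeasure (sigmaHatLaw n) := by
  have hn' : (1 : ℝ) < n := by exact_mod_cast hn
  have : IsProbabilityMeasure (gammaMeasure (((n : ℝ) - 1) / 2) (1 / 2)) :=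
    isProbabilityMeasure_gammaMeasure (by linarith) (by norm_num)
  exact Measure.isProbabilityMeasure_map (by fun_prop)

instance (n : ℕ) : SFinite (sigmaHatLaw n) := by
  unfold sigmaHatLaw gammaMeasure
  infer_instance

theorem ae_nonneg_sigmaHatLaw (n : ℕ) : ∀ᵐ s ∂sigmaHatLaw n, 0 ≤ s :=
  (ae_map_iff (by fun_prop) measurableSet_Ici).2 (ae_of_all _ fun _ => Real.sqrt_nonneg _)

section CoverUV

variable {n : ℕ} {est : ℝ → ℝ → ℝ}

theorem measurableSet_coverUV (hest : Measurable fun p : ℝ × ℝ => est p.2 p.1) (a θ : ℝ) :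
    MeasurableSet {p : ℝ × ℝ | est p.2 p.1 - p.2 * a ≤ θ ∧ θ ≤ est p.2 p.1 + p.2 * a} :=
  (measurableSet_le (hest.sub (measurable_snd.mul_const a)) measurable_const).inter
    (measurableSet_le measurable_const (hest.add (measurable_snd.mul_const a)))

theorem measurable_cover (hest : Measurable fun p : ℝ × ℝ => est p.2 p.1) (a θ : ℝ) :
    Measurable fun s => cover n (est s) (s * a) (s * a) θ :=
  (measurable_measure_prodMk_right (measurableSet_coverUV hest a θ)).ennreal_toReal

theorem coverUV_eq_integral_cover (hest : Measurable fun p : ℝ × ℝ => est p.2 p.1) (a θ : ℝ) :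
    coverUV n est a θ = ∫ s, cover n (est s) (s * a) (s * a) θ ∂sigmaHatLaw n := by
  rw [coverUV, Measure.prod_apply_symm (measurableSet_coverUV hest a θ), ← integral_toReal
    (measurable_measure_prodMk_right (measurableSet_coverUV hest a θ)).aemeasurable
    (ae_of_all _ fun _ => measure_lt_top _ _)]
  rfl

end CoverUV

theorem iInf_integral_eq_integral_of_eventually_eq {α ι : Type*} [MeasurableSpace α]
    {μ : Measure α} {l : Filter ι} [l.NeBot] [l.IsCountablyGenerated] {f : ι → α → ℝ}
    {g bound : α → ℝ} (hf : ∀ i, AEStronglyMeasurable (f i) μ) (hbound : Integrable bound μ)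
    (hf_bound : ∀ i, ∀ᵐ x ∂μ, ‖f i x‖ ≤ bound x) (hg : Integrable g μ)
    (hgf : ∀ i, ∀ᵐ x ∂μ, g x ≤ f i x) (hfg : ∀ᵐ x ∂μ, ∀ᶠ i in l, f i x = g x) :
    ⨅ i, ∫ x, f i x ∂μ = ∫ x, g x ∂μ := by
  have hle : ∀ i, ∫ x, g x ∂μ ≤ ∫ x, f i x ∂μ := fun i =>
    integral_mono_ae hg (hbound.mono' (hf i) (hf_bound i)) (hgf i)
  have hlim : Tendsto (fun i => ∫ x, f i x ∂μ) l (𝓝 (∫ x, g x ∂μ)) :=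
    tendsto_integral_filter_of_dominated_convergence bound (.of_forall hf) (.of_forall hf_bound)
      hbound (hfg.mono fun _ hx => tendsto_nhds_of_eventually_eq hx)
  have : Nonempty ι := l.nonempty_of_neBot
  exact le_antisymm
    (ge_of_tendsto hlim (.of_forall fun i => ciInf_le ⟨_, forall_mem_range.2 hle⟩ i))
    (le_ciInf hle)

/-- Equation (finite): the infimal coverage probability of the unknown-variance interval
`E_{S,n} = [θ̃_S - σ̂ a, θ̃_S + σ̂ a]` based on the feasible soft-thresholding estimator
`θ̃_S = sign(ȳ)(|ȳ| - σ̂ η)₊` equals `T_{n-1}(√n (a - η)) - T_{n-1}(√n (-a - η))`. -/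
theorem stmt_13 (n : ℕ) (hn : 2 ≤ n) (η a : ℝ) (hη : 0 < η) (ha : 0 ≤ a) :
    (⨅ θ : ℝ, coverUV n (fun s y => softThresh (s * η) y) a θ) =
      studentCDF n (Real.sqrt n * (a - η)) - studentCDF n (Real.sqrt n * (-a - η)) := by
  have hn₀ : 0 < n := by omega
  have := isProbabilityMeasure_sigmaHatLaw hn
  set est : ℝ → ℝ → ℝ := fun s y => softThresh (s * η) y
  have hest : Measurable fun p : ℝ × ℝ => est p.2 p.1 :=
    (measurable_snd.mul_const η).softThresh measurable_fst
  have hint := integrable_stdNormCDF_mul (μ := sigmaHatLaw n)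
  simp only [coverUV_eq_integral_cover hest, studentCDF, ← integral_sub (hint _) (hint _),
    ← softThreshInfCover_mul]
  have hnonneg := ae_nonneg_sigmaHatLaw n
  refine iInf_integral_eq_integral_of_eventually_eq (l := atBot) (bound := fun _ => 1)
    (fun θ => (measurable_cover hest a θ).aestronglyMeasurable) (integrable_const 1)
    (fun θ => ae_of_all _ fun s => abs_cover_le_one ..) ?_ (fun θ => hnonneg.mono fun s hs => ?_)
    (hnonneg.mono fun s hs => ?_)
  · simp only [softThreshInfCover_mul]
    exact (hint _).sub (hint _)
  · exact softThreshInfCover_le_cover hn₀ (mul_nonneg hs hη.le) (mul_nonneg hs ha) θ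
  · filter_upwards [eventually_lt_atBot (-(s * a))] with θ hθ
    exact cover_softThresh_of_lt_neg hn₀ (mul_nonneg hs hη.le) (mul_nonneg hs ha) hθ
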